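/- Suppose ‖δ - μ_gp‖ ≤ ‖β‖·‖σ‖ and the CBF constraint (∂B/∂x)ᵀ B₀ μ_qp - γ(h(x)) + (∂B/∂x)ᵀ(A₀x + B₀(μ_d + μ_pd)) + ‖(∂B/∂x)ᵀ B₀‖·‖β‖·‖σ‖ ≤ 0 holds. Then along the dynamics ẋ = A₀x + B₀(μ_d + μ_pd + μ_qp - μ_gp + δ), the barrier function satisfies Ḃ(x) ≤ γ(h(x)). -/

import Mathlib

/-!
Along the closed loop, `Ḃ` is the nominal drift term plus the QP input term plus
`(∂B/∂x)ᵀ B₀ (δ - μ_gp)`. By Cauchy–Schwarz and the bound on the model error `δ - μ_gp`,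
this last term is at most `‖(∂B/∂x)ᵀ B₀‖ ‖β‖ ‖σ‖`, the robustness margin built into the
CBF constraint.
-/

open Matrix

/-- Euclidean norm of a finite real vector. -/
noncomputable def euclNorm {n : ℕ} (v : Fin n → ℝ) : ℝ :=
  ‖(WithLp.equiv 2 (Fin n → ℝ)).symm v‖

lemma euclNorm_nonneg {n : ℕ} (v : Fin n → ℝ) : 0 ≤ euclNorm v := norm_nonneg _

lemma dotProduct_le_euclNorm_mul_euclNorm {n : ℕ} (v u : Fin n → ℝ) :
    v ⬝ᵥ u ≤ euclNorm v * euclNorm u := by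
  have := real_inner_le_norm ((WithLp.equiv 2 (Fin n → ℝ)).symm v)
    ((WithLp.equiv 2 (Fin n → ℝ)).symm u)
  simpa [euclNorm, dotProduct, PiLp.inner_apply, RCLike.inner_apply, mul_comm] using this

lemma dotProduct_le_of_euclNorm_le {n : ℕ} (v u : Fin n → ℝ) {r : ℝ} (hu : euclNorm u ≤ r) :
    v ⬝ᵥ u ≤ euclNorm v * r :=
  (dotProduct_le_euclNorm_mul_euclNorm v u).trans
    (mul_le_mul_of_nonneg_left hu (euclNorm_nonneg v))

lemma dotProduct_add_mulVec_add {m k : Type*} [Fintype m] [Fintype k] {R : Type*}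
    [CommSemiring R] (w : m → R) (A : Matrix m m R) (B : Matrix m k R) (x : m → R)
    (u v : k → R) :
    w ⬝ᵥ (A *ᵥ x + B *ᵥ (u + v)) = w ⬝ᵥ (A *ᵥ x + B *ᵥ u) + vecMul w B ⬝ᵥ v := by
  rw [mulVec_add, ← add_assoc, dotProduct_add w _ (B *ᵥ v), dotProduct_mulVec]

theorem cbf_constraint_implies_safety
    (n : ℕ) (A₀ : Matrix (Fin (2 * n)) (Fin (2 * n)) ℝ)
    (B₀ : Matrix (Fin (2 * n)) (Fin n) ℝ)
    (x gradB : Fin (2 * n) → ℝ)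
    (μd μpd μqp μgp δ β σ : Fin n → ℝ)
    (h : (Fin (2 * n) → ℝ) → ℝ) (γ : ℝ → ℝ)
    (hdist : euclNorm (δ - μgp) ≤ euclNorm β * euclNorm σ)
    (hconstraint :
      Matrix.vecMul gradB B₀ ⬝ᵥ μqp - γ (h x) +
        gradB ⬝ᵥ (A₀.mulVec x + B₀.mulVec (μd + μpd)) +
        euclNorm (Matrix.vecMul gradB B₀) * euclNorm β * euclNorm σ ≤ 0) :
    gradB ⬝ᵥ (A₀.mulVec x + B₀.mulVec (μd + μpd + μqp - μgp + δ)) ≤ γ (h x) := by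
  have hinput : μd + μpd + μqp - μgp + δ = μd + μpd + (μqp + (δ - μgp)) := by abel
  have hmodelError := dotProduct_le_of_euclNorm_le (vecMul gradB B₀) _ hdist
  rw [hinput, dotProduct_add_mulVec_add, dotProduct_add (vecMul gradB B₀)]
  linarith
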